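/- Work in A = ℤ[ψ1, θ1, λ1, λ2, θ2]. Let B_open = ℤ[ψ1,θ1,λ1,λ2]/I₄ where I₄ = (λ2−ψ1(λ1−ψ1), (λ1+θ1)(24λ1²−48λ2), 20(λ1+θ1)λ1λ2, θ1(λ1+θ1)), and let B_cl = ℤ[ξ,λ1,λ2]/(2ξ, ξ(λ1−ξ)). Let G₁ : A → B_open send θ2 ↦ 0 and each other variable to its like-named class, and let G₂ : A → B_cl send ψ1 ↦ ξ, θ1 ↦ ξ−λ1, λ1 ↦ λ1, λ2 ↦ λ2, θ2 ↦ λ2. Then ker G₁ ∩ ker G₂ equals the ideal I₇ generated by the seven elements λ2−θ2−ψ1(λ1−ψ1), (λ1+θ1)(24λ1²−48λ2), 20(λ1+θ1)λ1λ2, θ1(λ1+θ1), 2ψ1θ2, θ2(θ1+λ1−ψ1), ψ1θ1θ2. -/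

import Mathlib

open MvPolynomial

/-- The ideal `I₄ ⊂ ℤ[ψ1,θ1,λ1,λ2]` generated by `λ2−ψ1(λ1−ψ1)`,
`(λ1+θ1)(24λ1²−48λ2)`, `20(λ1+θ1)λ1λ2` and `θ1(λ1+θ1)`.
Variables: `ψ1 = X 0`, `θ1 = X 1`, `λ1 = X 2`, `λ2 = X 3`. -/
noncomputable def I₄ : Ideal (MvPolynomial (Fin 4) ℤ) :=
  Ideal.span {X 3 - X 0 * (X 2 - X 0),
    (X 2 + X 1) * (24 * X 2 ^ 2 - 48 * X 3),
    20 * (X 2 + X 1) * X 2 * X 3,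
    X 1 * (X 2 + X 1)}

/-- The ideal `(2ξ, ξ(λ1−ξ)) ⊂ ℤ[ξ,λ1,λ2]`.  Variables: `ξ = X 0`, `λ1 = X 1`,
`λ2 = X 2`. -/
noncomputable def Icl : Ideal (MvPolynomial (Fin 3) ℤ) :=
  Ideal.span {2 * X 0, X 0 * (X 1 - X 0)}

/-- `G₁ : A = ℤ[ψ1,θ1,λ1,λ2,θ2] → B_open = ℤ[ψ1,θ1,λ1,λ2]/I₄`, sending `θ2 ↦ 0` and
each other variable to its like-named class.  Source variables: `ψ1 = X 0`,
`θ1 = X 1`, `λ1 = X 2`, `λ2 = X 3`, `θ2 = X 4`. -/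
noncomputable def G₁ : MvPolynomial (Fin 5) ℤ →+* MvPolynomial (Fin 4) ℤ ⧸ I₄ :=
  (Ideal.Quotient.mk I₄).comp
    ((aeval ![X 0, X 1, X 2, X 3, 0] :
        MvPolynomial (Fin 5) ℤ →ₐ[ℤ] MvPolynomial (Fin 4) ℤ) :
      MvPolynomial (Fin 5) ℤ →+* MvPolynomial (Fin 4) ℤ)

/-- `G₂ : A = ℤ[ψ1,θ1,λ1,λ2,θ2] → B_cl = ℤ[ξ,λ1,λ2]/(2ξ, ξ(λ1−ξ))`, sending
`ψ1 ↦ ξ`, `θ1 ↦ ξ−λ1`, `λ1 ↦ λ1`, `λ2 ↦ λ2`, `θ2 ↦ λ2`. -/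
noncomputable def G₂ : MvPolynomial (Fin 5) ℤ →+* MvPolynomial (Fin 3) ℤ ⧸ Icl :=
  (Ideal.Quotient.mk Icl).comp
    ((aeval ![X 0, X 0 - X 1, X 1, X 2, X 2] :
        MvPolynomial (Fin 5) ℤ →ₐ[ℤ] MvPolynomial (Fin 3) ℤ) :
      MvPolynomial (Fin 5) ℤ →+* MvPolynomial (Fin 3) ℤ)

/-!
Write `ψ1, θ1, λ1, λ2, θ2` for `X 0, …, X 4`. An element `p ∈ ker G₁` is congruent modulo `θ2` to
`p(θ2 = 0) ∈ I₄`, and `I₄ ⊆ I₇ + (θ2)` because `λ2 - ψ1(λ1 - ψ1) ≡ θ2` modulo `I₇`; hence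
`p ≡ θ2 u` modulo `I₇`. Since `θ2 θ1 ≡ θ2 (ψ1 - λ1)` and `θ2² ≡ θ2 λ2` modulo `I₇`, the factor `u`
may be replaced by `w(ψ1, λ1, λ2)`, where `w` is the image of `u` under the substitution defining
`G₂`, so that `G₂ (θ2 u) = λ2 w`. Now `(2ξ, ξ(λ1 - ξ)) = (ξ) ∩ (2, λ1 - ξ)` is the intersection of
the kernels of two maps to domains that do not kill `λ2`, so `λ2 w ∈ (2ξ, ξ(λ1 - ξ))` forces
`w ∈ (2ξ, ξ(λ1 - ξ))`, and `θ2 · 2ψ1`, `θ2 ψ1 (λ1 - ψ1)` lie in `I₇`.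
-/

namespace MvPolynomial

variable {R σ : Type*} [CommRing R]

theorem sub_aeval_mem {J : Ideal (MvPolynomial σ R)} {f : σ → MvPolynomial σ R}
    (hf : ∀ i, X i - f i ∈ J) (p : MvPolynomial σ R) : p - aeval f p ∈ J := by
  have hcomp : (Ideal.Quotient.mkₐ R J).comp (aeval f) = Ideal.Quotient.mkₐ R J := by
    ext i
    simpa [Ideal.Quotient.eq] using J.neg_mem (hf i)
  rw [← Ideal.Quotient.eq, ← Ideal.Quotient.mkₐ_eq_mk R, ← AlgHom.comp_apply, hcomp]

end MvPolynomial

noncomputable def I₇ : Ideal (MvPolynomial (Fin 5) ℤ) :=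
  Ideal.span {X 3 - X 4 - X 0 * (X 2 - X 0),
    (X 2 + X 1) * (24 * X 2 ^ 2 - 48 * X 3),
    20 * (X 2 + X 1) * X 2 * X 3,
    X 1 * (X 2 + X 1),
    2 * X 0 * X 4,
    X 4 * (X 1 + X 2 - X 0),
    X 0 * X 1 * X 4}

theorem I₇_le_ker_G₁ : I₇ ≤ RingHom.ker G₁ := by
  simp only [I₇, Ideal.span_le, Set.insert_subset_iff, Set.singleton_subset_iff, SetLike.mem_coe,
    RingHom.mem_ker, G₁, RingHom.comp_apply, Ideal.Quotient.eq_zero_iff_mem]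
  simp only [aeval_eq_bind₁, RingHom.coe_coe, map_sub, map_mul, map_add, map_pow, map_ofNat,
    bind₁_X_right, Matrix.cons_val, Matrix.cons_val_zero, Matrix.cons_val_one, sub_zero, mul_zero,
    zero_mul, zero_mem, and_true]
  refine ⟨?_, ?_, ?_, ?_⟩ <;> exact Ideal.subset_span (by simp)

theorem two_mul_X0_mem_Icl : 2 * X 0 ∈ Icl := Ideal.subset_span (by simp)

theorem X0_mul_X1_sub_X0_mem_Icl : X 0 * (X 1 - X 0) ∈ Icl := Ideal.subset_span (by simp)

theorem I₇_le_ker_G₂ : I₇ ≤ RingHom.ker G₂ := by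
  simp only [I₇, Ideal.span_le, Set.insert_subset_iff, Set.singleton_subset_iff, SetLike.mem_coe,
    RingHom.mem_ker, G₂, RingHom.comp_apply, Ideal.Quotient.eq_zero_iff_mem]
  simp only [aeval_eq_bind₁, RingHom.coe_coe, map_sub, map_mul, map_add, map_pow, map_ofNat,
    bind₁_X_right, Matrix.cons_val, Matrix.cons_val_zero, Matrix.cons_val_one, sub_self, zero_sub,
    add_sub_cancel, sub_add_cancel, neg_mem_iff, mul_zero, zero_mem, true_and]
  have h₁ := two_mul_X0_mem_Icl
  have h₂ := X0_mul_X1_sub_X0_mem_Icl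
  refine ⟨h₂, ?_, ?_, ?_, ?_, ?_⟩
  · convert Icl.mul_mem_left (12 * X 1 ^ 2 - 24 * X 2) h₁ using 1; ring
  · convert Icl.mul_mem_left (10 * X 1 * X 2) h₁ using 1; ring
  · convert Icl.mul_mem_left (-1) h₂ using 1; ring
  · convert Icl.mul_mem_left (X 2) h₁ using 1; ring
  · convert Icl.mul_mem_left (-X 2) h₂ using 1; ring

theorem X0_mul_X2_sub_X0_mul_X4_mem_I₇ : X 0 * (X 2 - X 0) * X 4 ∈ I₇ := by
  have h₆ : X 4 * (X 1 + X 2 - X 0) ∈ I₇ := Ideal.subset_span (by simp)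
  have h₇ : X 0 * X 1 * X 4 ∈ I₇ := Ideal.subset_span (by simp)
  convert sub_mem (I₇.mul_mem_left (X 0) h₆) h₇ using 1
  ring

theorem map_rename_I₄_le : I₄.map (rename Fin.castSucc) ≤ I₇ ⊔ Ideal.span {X 4} := by
  rw [I₄, Ideal.map_span, Ideal.span_le]
  simp only [Set.image_insert_eq, Set.image_singleton, Set.insert_subset_iff,
    Set.singleton_subset_iff, SetLike.mem_coe]
  simp only [map_sub, map_mul, map_add, map_pow, map_ofNat, rename_X, Fin.reduceCastSucc,
    Fin.castSucc_zero]
  refine ⟨?_, ?_, ?_, ?_⟩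
  · have h₁ : X 3 - X 4 - X 0 * (X 2 - X 0) ∈ I₇ := Ideal.subset_span (by simp)
    convert add_mem (Ideal.mem_sup_left h₁) (Ideal.mem_sup_right (Ideal.mem_span_singleton_self _))
      using 1
    ring
  all_goals exact Ideal.mem_sup_left (Ideal.subset_span (by simp))

theorem Icl_eq_ker_inf_ker :
    Icl = RingHom.ker (aeval ![0, X 1, X 2] :
        MvPolynomial (Fin 3) ℤ →ₐ[ℤ] MvPolynomial (Fin 3) ℤ) ⊓
      RingHom.ker (aeval ![X 0, X 0, X 2] :
        MvPolynomial (Fin 3) ℤ →ₐ[ℤ] MvPolynomial (Fin 3) (ZMod 2)) := by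
  refine le_antisymm ?_ ?_
  · rw [Icl, Ideal.span_le]
    simp [Set.insert_subset_iff, map_ofNat, CharTwo.two_eq_zero]
  rintro w ⟨h₀, h₁⟩
  rw [SetLike.mem_coe, RingHom.mem_ker] at h₀ h₁
  obtain ⟨q, rfl⟩ : X 0 ∣ w := by
    have hw := sub_aeval_mem (J := Ideal.span {X 0}) (f := ![0, X 1, X 2])
      (fun i => by fin_cases i <;> simp) w
    rwa [h₀, sub_zero, Ideal.mem_span_singleton] at hw
  set q₀ := (aeval ![X 0, X 0, X 2] : MvPolynomial (Fin 3) ℤ →ₐ[ℤ] MvPolynomial (Fin 3) ℤ) q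
  obtain ⟨r, hr⟩ : X 1 - X 0 ∣ q - q₀ := by
    rw [← Ideal.mem_span_singleton]
    exact sub_aeval_mem (fun i => by fin_cases i <;> simp) q
  obtain ⟨t, ht⟩ : 2 ∣ q₀ := by
    have hq : aeval ![X 0, X 0, X 2] q = (0 : MvPolynomial (Fin 3) (ZMod 2)) := by
      simpa [X_ne_zero] using h₁
    have hq₀ : map (Int.castRingHom (ZMod 2)) q₀ = 0 := by
      rw [← hq, map_aeval, aeval_eq_eval₂Hom, Subsingleton.elim ((map _).comp _) (algebraMap ℤ _)]
      congr 2 with i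
      fin_cases i <;> simp
    rwa [← RingHom.mem_ker, ker_map, ZMod.ker_intCastRingHom, Ideal.map_span, Set.image_singleton,
      Nat.cast_ofNat, map_ofNat, Ideal.mem_span_singleton] at hq₀
  have hw : X 0 * q = t * (2 * X 0) + r * (X 0 * (X 1 - X 0)) := by
    linear_combination X 0 * hr + X 0 * ht
  rw [hw]
  exact add_mem (Icl.mul_mem_left t two_mul_X0_mem_Icl)
    (Icl.mul_mem_left r X0_mul_X1_sub_X0_mem_Icl)

theorem mem_Icl_of_X2_mul_mem {w : MvPolynomial (Fin 3) ℤ} (h : X 2 * w ∈ Icl) : w ∈ Icl := by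
  rw [Icl_eq_ker_inf_ker] at h ⊢
  simpa [X_ne_zero] using h

theorem map_rename_Icl_le_colon : Icl.map (rename ![0, 2, 3]) ≤ I₇.colon {X 4} := by
  rw [Icl, Ideal.map_span, Ideal.span_le]
  simp only [Set.image_insert_eq, Set.image_singleton, Set.insert_subset_iff,
    Set.singleton_subset_iff, SetLike.mem_coe, Submodule.mem_colon_singleton, smul_eq_mul]
  simp only [map_sub, map_mul, map_ofNat, rename_X]
  exact ⟨Ideal.subset_span (by simp), X0_mul_X2_sub_X0_mul_X4_mem_I₇⟩

theorem ker_G₁_le_I₇_sup_span_X4 : RingHom.ker G₁ ≤ I₇ ⊔ Ideal.span {X 4} := by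
  intro p hp
  set ρ : MvPolynomial (Fin 5) ℤ →ₐ[ℤ] MvPolynomial (Fin 4) ℤ := aeval ![X 0, X 1, X 2, X 3, 0]
  have hρ : ρ p ∈ I₄ := Ideal.Quotient.eq_zero_iff_mem.mp hp
  have hlift : p - rename Fin.castSucc (ρ p) ∈ Ideal.span {X 4} := by
    rw [comp_aeval_apply]
    refine sub_aeval_mem (fun i => ?_) p
    fin_cases i <;> simp
  simpa using add_mem (Ideal.mem_sup_right hlift) (map_rename_I₄_le (Ideal.mem_map_of_mem _ hρ))

theorem X4_mul_mem_I₇_of_G₂_eq_zero {u : MvPolynomial (Fin 5) ℤ} (hu : G₂ (X 4 * u) = 0) : X 4 * u ∈ I₇ := by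
  set τ : MvPolynomial (Fin 5) ℤ →ₐ[ℤ] MvPolynomial (Fin 3) ℤ :=
    aeval ![X 0, X 0 - X 1, X 1, X 2, X 2]
  have hτ : τ u ∈ Icl := by
    refine mem_Icl_of_X2_mul_mem (Ideal.Quotient.eq_zero_iff_mem.mp ?_)
    simpa [G₂, τ] using hu
  have hlift : u - rename ![0, 2, 3] (τ u) ∈ I₇.colon {X 4} := by
    rw [comp_aeval_apply]
    refine sub_aeval_mem (fun i => ?_) u
    rw [Submodule.mem_colon_singleton, smul_eq_mul]
    have h₁ : X 3 - X 4 - X 0 * (X 2 - X 0) ∈ I₇ := Ideal.subset_span (by simp)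
    have h₆ : X 4 * (X 1 + X 2 - X 0) ∈ I₇ := Ideal.subset_span (by simp)
    have hθ₁ : (X 1 - (X 0 - X 2)) * X 4 ∈ I₇ := by
      convert h₆ using 1
      ring
    have hθ₂ : (X 4 - X 3) * X 4 ∈ I₇ := by
      convert sub_mem (I₇.mul_mem_left (-X 4) h₁) X0_mul_X2_sub_X0_mul_X4_mem_I₇ using 1
      ring
    fin_cases i <;> simp [hθ₁, hθ₂]
  rw [mul_comm, ← smul_eq_mul, ← Submodule.mem_colon_singleton]
  simpa using add_mem hlift (map_rename_Icl_le_colon (Ideal.mem_map_of_mem _ hτ))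

/-- `ker G₁ ∩ ker G₂` equals the ideal `I₇` generated by the seven elements
`λ2−θ2−ψ1(λ1−ψ1)`, `(λ1+θ1)(24λ1²−48λ2)`, `20(λ1+θ1)λ1λ2`, `θ1(λ1+θ1)`,
`2ψ1θ2`, `θ2(θ1+λ1−ψ1)`, `ψ1θ1θ2`. -/
theorem ker_inf_ker_eq_I₇ :
    RingHom.ker G₁ ⊓ RingHom.ker G₂ =
      Ideal.span {X 3 - X 4 - X 0 * (X 2 - X 0),
        (X 2 + X 1) * (24 * X 2 ^ 2 - 48 * X 3),
        20 * (X 2 + X 1) * X 2 * X 3,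
        X 1 * (X 2 + X 1),
        2 * X 0 * X 4,
        X 4 * (X 1 + X 2 - X 0),
        X 0 * X 1 * X 4} := by
  refine le_antisymm (fun p hp => ?_) (le_inf I₇_le_ker_G₁ I₇_le_ker_G₂)
  obtain ⟨hp₁, hp₂⟩ := Submodule.mem_inf.mp hp
  obtain ⟨j, hj, v, hv, rfl⟩ := Submodule.mem_sup.mp (ker_G₁_le_I₇_sup_span_X4 hp₁)
  obtain ⟨u, rfl⟩ := Ideal.mem_span_singleton.mp hv
  have hu : G₂ (X 4 * u) = 0 := by
    simpa [RingHom.mem_ker.mp (I₇_le_ker_G₂ hj)] using hp₂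
  exact add_mem hj (X4_mul_mem_I₇_of_G₂_eq_zero hu)
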